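/- arXiv:2410.15000 — 2 statements merged into one kernel-verified Lean document; each statement's English description precedes it below -/
import Mathlib

section
/- Let G be a finite simple connected C-canonical graph of order n and diameter d with d ≡ 0 (mod 3) and m_G(−1) = n − d − 1, and let P = v_1 v_2 ⋯ v_{d+1} be a diameter path of G. Suppose x is a vertex not on P whose unique neighbor on P is v_i, and u is a vertex not on P adjacent to exactly v_j and v_{j+1} on P. If x is adjacent to u, then j = i or j = i − 1. -/
attribute [local instance] Classical.propDecidable

/-- The multiplicity of `-1` as an eigenvalue of the adjacency matrix of `G`,
i.e. the dimension over `ℝ` of the kernel of `A + I`. -/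
noncomputable def multNegOne {V : Type*} [Fintype V] (G : SimpleGraph V) : ℕ :=
  Module.finrank ℝ (LinearMap.ker (Matrix.toLin' (G.adjMatrix ℝ + 1)))

/-- The set of indices `i ∈ {1, …, d+1}` such that `x` is adjacent to the vertex `v i`
of the diameter path `v 1, v 2, …, v (d+1)`. -/
noncomputable def pathNbrs {V : Type*} (G : SimpleGraph V) (d : ℕ) (v : ℕ → V) (x : V) :
    Finset ℕ :=
  (Finset.Icc 1 (d + 1)).filter fun i => G.Adj x (v i)

/-!
Let `T` be the vertex set of `P`. A vector `y ∈ ker (A + I)` vanishing off `T` satisfies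
`y (v (a - 1)) + y (v a) + y (v (a + 1)) = 0` along `P` with zero boundary values, so it is a
multiple of the periodic sequence `0, 1, -1, 0, …`, which does not vanish at `d + 2 ≢ 0 (mod 3)`;
hence `y = 0`. Restriction to `V \ T` is therefore injective on `ker (A + I)`, and since both
spaces have dimension `n - d - 1` it is onto: some `y ∈ ker (A + I)` is the indicator of `x`
off `T`. Along `P` this `y` solves the same recurrence except at `v i`, and its rows at `x` and
`u` give `y (v i) = -1` and `y (v j) + y (v (j + 1)) = -1`. Solving from both ends of `P` forces
`i ≡ 1 (mod 3)` and determines `y` on `P`; the walk `v i, x, u, v j` bounds `|i - j|` by `3`, and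
among the remaining positions of `j` only `j = i` and `j = i - 1` give the sum `-1`.
-/

open Finset

/-- `0, 1, -1, 0, 1, -1, …`: the solution of `g a + g (a + 1) + g (a + 2) = 0` with
`g 0 = 0` and `g 1 = 1`. -/
noncomputable def negOneSeq (a : ℕ) : ℝ :=
  if a % 3 = 1 then 1 else if a % 3 = 2 then -1 else 0

lemma negOneSeq_add_add (a : ℕ) : negOneSeq a + negOneSeq (a + 1) + negOneSeq (a + 2) = 0 := by
  unfold negOneSeq
  rcases (by omega : a % 3 = 0 ∨ a % 3 = 1 ∨ a % 3 = 2) with h | h | h <;>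
    simp [h, Nat.add_mod a 1, Nat.add_mod a 2]

lemma negOneSeq_eq_zero_iff {a : ℕ} : negOneSeq a = 0 ↔ a % 3 = 0 := by
  unfold negOneSeq; split_ifs <;> norm_num <;> omega

lemma negOneSeq_eq_one_iff {a : ℕ} : negOneSeq a = 1 ↔ a % 3 = 1 := by
  unfold negOneSeq; split_ifs <;> norm_num <;> omega

lemma negOneSeq_eq_neg_one_iff {a : ℕ} : negOneSeq a = -1 ↔ a % 3 = 2 := by
  unfold negOneSeq; split_ifs <;> norm_num <;> omega

lemma eq_mul_negOneSeq {g : ℕ → ℝ} {K : ℕ} (h0 : g 0 = 0)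
    (hrec : ∀ a < K, g a + g (a + 1) + g (a + 2) = 0) :
    ∀ a ≤ K + 1, g a = g 1 * negOneSeq a := by
  have key : ∀ a ≤ K, g a = g 1 * negOneSeq a ∧ g (a + 1) = g 1 * negOneSeq (a + 1) := by
    intro a ha
    induction a with
    | zero => simp [negOneSeq, h0]
    | succ a ih =>
      obtain ⟨h1, h2⟩ := ih (by omega)
      refine ⟨h2, ?_⟩
      linear_combination hrec a (by omega) - h1 - h2 - g 1 * negOneSeq_add_add a
  rintro (_ | a) ha
  exacts [(key 0 (by omega)).1, (key a (by omega)).2]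

lemma negOneSeq_solution_of_indicator {g : ℕ → ℝ} {N i : ℕ} (hN : (N + 1) % 3 = 2)
    (hiN : i ≤ N) (h0 : g 0 = 0) (hN1 : g (N + 1) = 0) (hi : g i = -1)
    (hrec : ∀ a < N, g a + g (a + 1) + g (a + 2) + (if a + 1 = i then 1 else 0) = 0) :
    i % 3 = 1 ∧ (∀ a ≤ i, g a = -negOneSeq a) ∧
      ∀ a, i ≤ a → a ≤ N + 1 → g a = -negOneSeq (N + 1 - a) := by
  have hleft := eq_mul_negOneSeq (K := i - 1) h0 fun a ha => by
    simpa [show a + 1 ≠ i by omega] using hrec a (by omega)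
  have hright := eq_mul_negOneSeq (g := fun m => g (N + 1 - m)) (K := N - i) (by simpa using hN1)
    fun m hm => by
      obtain ⟨a, rfl⟩ : ∃ a, N = a + m + 1 := ⟨N - m - 1, by omega⟩
      have := hrec a (by omega)
      rw [if_neg (by omega)] at this
      simp only [show a + m + 1 + 1 - m = a + 2 by omega,
        show a + m + 1 + 1 - (m + 1) = a + 1 by omega, show a + m + 1 + 1 - (m + 2) = a by omega]
      linarith
  simp only [show N + 1 - 1 = N by omega] at hright
  have hiL := hleft i (by omega)
  have hiR := hright (N + 1 - i) (by omega)
  rw [show N + 1 - (N + 1 - i) = i by omega, hi] at hiR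
  rw [hi] at hiL
  have hi3 : i % 3 = 1 := by
    have h1 : negOneSeq i ≠ 0 := fun h => by simp [h] at hiL
    have h2 : negOneSeq (N + 1 - i) ≠ 0 := fun h => by simp [h] at hiR
    rw [Ne, negOneSeq_eq_zero_iff] at h1 h2
    omega
  have hg1 : g 1 = -1 := by simpa [negOneSeq_eq_one_iff.mpr hi3] using hiL.symm
  have hgN : g N = -1 := by
    simpa [negOneSeq_eq_one_iff.mpr (by omega : (N + 1 - i) % 3 = 1)] using hiR.symm
  refine ⟨hi3, fun a ha => by rw [hleft a (by omega), hg1, neg_one_mul], fun a ha haN => ?_⟩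
  have := hright (N + 1 - a) (by omega)
  rwa [show N + 1 - (N + 1 - a) = a by omega, hgN, neg_one_mul] at this

lemma eq_or_eq_pred_of_add_eq_neg_one {g : ℕ → ℝ} {N i j : ℕ} (hN : (N + 1) % 3 = 2)
    (hiN : i ≤ N) (h0 : g 0 = 0) (hN1 : g (N + 1) = 0) (hi : g i = -1)
    (hrec : ∀ a < N, g a + g (a + 1) + g (a + 2) + (if a + 1 = i then 1 else 0) = 0)
    (hjN : j + 1 ≤ N) (hij : i ≤ j + 3) (hji : j ≤ i + 2) (hj : g j + g (j + 1) = -1) :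
    j = i ∨ j = i - 1 := by
  obtain ⟨hi3, hleft, hright⟩ := negOneSeq_solution_of_indicator hN hiN h0 hN1 hi hrec
  rcases lt_or_ge j i with hlt | hge
  · rw [hleft j hlt.le, hleft (j + 1) hlt] at hj
    have : negOneSeq (j + 2) = -1 := by linear_combination hj + negOneSeq_add_add j
    have := negOneSeq_eq_neg_one_iff.mp this
    omega
  · obtain ⟨b, rfl⟩ : ∃ b, N = j + 1 + b := ⟨N - (j + 1), by omega⟩
    rw [hright j hge (by omega), hright (j + 1) (by omega) (by omega),
      show j + 1 + b + 1 - j = b + 2 by omega, show j + 1 + b + 1 - (j + 1) = b + 1 by omega] at hj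
    have : negOneSeq b = -1 := by linear_combination hj + negOneSeq_add_add b
    have := negOneSeq_eq_neg_one_iff.mp this
    omega

lemma Submodule.exists_mem_eq_of_forall_eq_zero {𝕜 V : Type*} [Field 𝕜] [Fintype V]
    {K : Submodule 𝕜 (V → 𝕜)} {S : Finset V}
    (hK : ∀ y ∈ K, (∀ z ∉ S, y z = 0) → y = 0)
    (hdim : Module.finrank 𝕜 K = Fintype.card {z // z ∉ S}) (f : V → 𝕜) :
    ∃ y ∈ K, ∀ z ∉ S, y z = f z := by
  let restrict : K →ₗ[𝕜] ({z // z ∉ S} → 𝕜) :=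
    (LinearMap.funLeft 𝕜 𝕜 Subtype.val).comp K.subtype
  have hinj : Function.Injective restrict := by
    rw [← LinearMap.ker_eq_bot, LinearMap.ker_eq_bot']
    intro y hy
    exact Subtype.ext <| hK y y.2 fun z hz => congrFun hy ⟨z, hz⟩
  obtain ⟨y, hy⟩ := (LinearMap.injective_iff_surjective_of_finrank_eq_finrank
    (by rw [hdim, Module.finrank_fintype_fun_eq_card])).mp hinj fun z => f z
  exact ⟨y, y.2, fun z hz => congrFun hy ⟨z, hz⟩⟩

section Path

variable {V : Type*} (G : SimpleGraph V)

/-- `v 1, …, v (d + 1)` is an induced path of length `d` in `G`. -/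
structure IsInducedPath (d : ℕ) (v : ℕ → V) : Prop where
  injOn : Set.InjOn v (Icc 1 (d + 1))
  adj_iff : ∀ a ∈ Icc 1 (d + 1), ∀ b ∈ Icc 1 (d + 1), G.Adj (v a) (v b) ↔ b = a + 1 ∨ a = b + 1

variable {G} {d : ℕ} {v : ℕ → V}

lemma isInducedPath_of_dist
    (hdist : ∀ a ∈ Icc 1 (d + 1), ∀ b ∈ Icc 1 (d + 1), G.dist (v a) (v b) = max a b - min a b) :
    IsInducedPath G d v where
  injOn a ha b hb h := by
    have := hdist a ha b hb
    rw [h, SimpleGraph.dist_self] at this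
    omega
  adj_iff a ha b hb := by
    rw [← SimpleGraph.dist_eq_one_iff_adj, hdist a ha b hb]
    omega

lemma SimpleGraph.dist_le_three {a b c e : V} (hab : G.Adj a b) (hbc : G.Adj b c)
    (hce : G.Adj c e) : G.dist a e ≤ 3 :=
  dist_le (.cons hab (.cons hbc (.cons hce .nil)))

lemma IsInducedPath.pathNbrs_succ (hP : IsInducedPath G d v) {a : ℕ} (ha : a ≤ d) :
    pathNbrs G d v (v (a + 1)) = (Icc 1 (d + 1)).filter fun b => b = a ∨ b = a + 2 := by
  ext b
  simp only [pathNbrs, mem_filter, and_congr_right_iff]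
  intro hb
  rw [hP.adj_iff (a + 1) (by simp; omega) b hb]
  omega

noncomputable def pathSeq (d : ℕ) (v : ℕ → V) (y : V → ℝ) (a : ℕ) : ℝ :=
  if a ∈ Icc 1 (d + 1) then y (v a) else 0

lemma pathSeq_of_mem {y : V → ℝ} {a : ℕ} (ha : a ∈ Icc 1 (d + 1)) :
    pathSeq d v y a = y (v a) :=
  if_pos ha

lemma IsInducedPath.sum_pathNbrs_succ (hP : IsInducedPath G d v) {a : ℕ} (ha : a ≤ d)
    (y : V → ℝ) :
    ∑ b ∈ pathNbrs G d v (v (a + 1)), y (v b) = pathSeq d v y a + pathSeq d v y (a + 2) := by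
  rw [hP.pathNbrs_succ ha, sum_filter]
  calc ∑ b ∈ Icc 1 (d + 1), (if b = a ∨ b = a + 2 then y (v b) else 0)
      = ∑ b ∈ Icc 1 (d + 1), ((if b = a then y (v b) else 0) + if b = a + 2 then y (v b) else 0) :=
        sum_congr rfl fun b _ => by split_ifs <;> first | (exfalso; omega) | simp
    _ = pathSeq d v y a + pathSeq d v y (a + 2) := by
        rw [sum_add_distrib, sum_ite_eq', sum_ite_eq', pathSeq, pathSeq]

end Path

section NegOneEigenspace

variable {V : Type*} [Fintype V] (G : SimpleGraph V)

noncomputable def negOneEigenspace : Submodule ℝ (V → ℝ) :=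
  LinearMap.ker (Matrix.toLin' (G.adjMatrix ℝ + 1))

variable {G}

lemma mem_negOneEigenspace_iff {y : V → ℝ} :
    y ∈ negOneEigenspace G ↔ ∀ w, y w + ∑ z ∈ G.neighborFinset w, y z = 0 := by
  simp [negOneEigenspace, funext_iff, SimpleGraph.adjMatrix_mulVec_apply, add_comm]

variable {d : ℕ} {v : ℕ → V}

lemma sum_neighborFinset_eq_sum_pathNbrs_add (hv : Set.InjOn v (Icc 1 (d + 1))) (y : V → ℝ)
    (w : V) :
    ∑ z ∈ G.neighborFinset w, y z = ∑ b ∈ pathNbrs G d v w, y (v b) +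
      ∑ z ∈ G.neighborFinset w with z ∉ (Icc 1 (d + 1)).image v, y z := by
  rw [← sum_filter_add_sum_filter_not _ (· ∈ (Icc 1 (d + 1)).image v),
    ← sum_image (s := pathNbrs G d v w) (hv.mono (coe_subset.mpr (filter_subset _ _)))]
  congr 2
  ext z
  simp only [pathNbrs, mem_filter, mem_image, SimpleGraph.mem_neighborFinset]
  constructor
  · rintro ⟨hwz, b, hb, rfl⟩
    exact ⟨b, ⟨hb, hwz⟩, rfl⟩
  · rintro ⟨b, ⟨hb, hwb⟩, rfl⟩
    exact ⟨hwb, b, hb, rfl⟩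

lemma sum_neighborFinset_filter_notMem_eq_ite {x : V} {T : Finset V} (hx : x ∉ T) {y : V → ℝ}
    (hy : ∀ z ∉ T, z ≠ x → y z = 0) (w : V) :
    ∑ z ∈ G.neighborFinset w with z ∉ T, y z = if G.Adj w x then y x else 0 := by
  split_ifs with hwx
  · refine sum_eq_single_of_mem x (by simp [hwx, hx]) fun z hz hzx => ?_
    exact hy z (mem_filter.mp hz).2 hzx
  · refine sum_eq_zero fun z hz => ?_
    rw [mem_filter, SimpleGraph.mem_neighborFinset] at hz
    exact hy z hz.2 fun h => hwx (h ▸ hz.1)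

lemma IsInducedPath.pathSeq_add_add (hP : IsInducedPath G d v) {y : V → ℝ}
    (hy : y ∈ negOneEigenspace G) {a : ℕ} (ha : a ≤ d) :
    pathSeq d v y a + pathSeq d v y (a + 1) + pathSeq d v y (a + 2) +
      ∑ z ∈ G.neighborFinset (v (a + 1)) with z ∉ (Icc 1 (d + 1)).image v, y z = 0 := by
  have hrow := mem_negOneEigenspace_iff.mp hy (v (a + 1))
  rw [sum_neighborFinset_eq_sum_pathNbrs_add hP.injOn, hP.sum_pathNbrs_succ ha] at hrow
  rw [pathSeq_of_mem (a := a + 1) (by simpa using ha)]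
  linarith

lemma IsInducedPath.eq_zero_of_mem_negOneEigenspace (hP : IsInducedPath G d v)
    (hd : (d + 2) % 3 ≠ 0) {y : V → ℝ} (hy : y ∈ negOneEigenspace G)
    (hsupp : ∀ z ∉ (Icc 1 (d + 1)).image v, y z = 0) : y = 0 := by
  have hsol := eq_mul_negOneSeq (g := pathSeq d v y) (K := d + 1) (by simp [pathSeq])
    fun a ha => by
      have := hP.pathSeq_add_add hy (a := a) (by omega)
      rwa [sum_eq_zero fun z hz => hsupp z (mem_filter.mp hz).2, add_zero] at this
  have hg1 : pathSeq d v y 1 = 0 := by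
    have hend := hsol (d + 2) le_rfl
    rw [pathSeq, if_neg (by simp)] at hend
    exact (mul_eq_zero.mp hend.symm).resolve_right (mt negOneSeq_eq_zero_iff.mp hd)
  funext z
  by_cases hz : z ∈ (Icc 1 (d + 1)).image v
  · obtain ⟨a, ha, rfl⟩ := mem_image.mp hz
    have := hsol a (by simp at ha; omega)
    rwa [hg1, zero_mul, pathSeq, if_pos ha] at this
  · exact hsupp z hz

lemma IsInducedPath.exists_mem_negOneEigenspace_eq_single (hP : IsInducedPath G d v)
    (hd : (d + 2) % 3 ≠ 0) (hmult : multNegOne G = Fintype.card V - (d + 1)) (x : V) :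
    ∃ y ∈ negOneEigenspace G,
      ∀ z ∉ (Icc 1 (d + 1)).image v, y z = (Pi.single x 1 : V → ℝ) z := by
  refine Submodule.exists_mem_eq_of_forall_eq_zero
    (fun y hy => hP.eq_zero_of_mem_negOneEigenspace hd hy) ?_ _
  rw [Fintype.card_subtype_compl, Fintype.card_coe, card_image_of_injOn hP.injOn,
    Nat.card_Icc, Nat.add_sub_cancel]
  exact hmult

lemma IsInducedPath.pathSeq_of_pathNbrs_eq_singleton (hP : IsInducedPath G d v) {x : V}
    (hxT : x ∉ (Icc 1 (d + 1)).image v) {y : V → ℝ} (hy : y ∈ negOneEigenspace G)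
    (hyx : y x = 1) (hsupp : ∀ z ∉ (Icc 1 (d + 1)).image v, z ≠ x → y z = 0) {i : ℕ}
    (hx : pathNbrs G d v x = {i}) :
    pathSeq d v y i = -1 ∧ ∀ a < d + 1, pathSeq d v y a + pathSeq d v y (a + 1) +
      pathSeq d v y (a + 2) + (if a + 1 = i then 1 else 0) = 0 := by
  have hi : i ∈ pathNbrs G d v x := hx ▸ mem_singleton_self i
  refine ⟨?_, fun a ha => ?_⟩
  · have hrow := mem_negOneEigenspace_iff.mp hy x
    rw [sum_neighborFinset_eq_sum_pathNbrs_add hP.injOn, hx, sum_singleton,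
      sum_neighborFinset_filter_notMem_eq_ite hxT hsupp, if_neg G.irrefl, hyx] at hrow
    rw [pathSeq_of_mem (mem_filter.mp hi).1]
    linarith
  · have hadj : G.Adj (v (a + 1)) x ↔ a + 1 = i := by
      rw [G.adj_comm, ← mem_singleton, ← hx, pathNbrs, mem_filter, mem_Icc]
      have : 1 ≤ a + 1 ∧ a + 1 ≤ d + 1 := by omega
      tauto
    have hrow := hP.pathSeq_add_add hy (a := a) (by omega)
    rw [sum_neighborFinset_filter_notMem_eq_ite hxT hsupp, hyx] at hrow
    simpa only [hadj] using hrow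

lemma IsInducedPath.sum_pathNbrs_of_adj (hP : IsInducedPath G d v) {x : V}
    (hxT : x ∉ (Icc 1 (d + 1)).image v) {y : V → ℝ} (hy : y ∈ negOneEigenspace G)
    (hyx : y x = 1) (hsupp : ∀ z ∉ (Icc 1 (d + 1)).image v, z ≠ x → y z = 0) {w : V}
    (hwT : w ∉ (Icc 1 (d + 1)).image v) (hwx : G.Adj w x) :
    ∑ b ∈ pathNbrs G d v w, y (v b) = -1 := by
  have hrow := mem_negOneEigenspace_iff.mp hy w
  rw [sum_neighborFinset_eq_sum_pathNbrs_add hP.injOn,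
    sum_neighborFinset_filter_notMem_eq_ite hxT hsupp, if_pos hwx, hyx,
    hsupp w hwT hwx.ne] at hrow
  linarith

end NegOneEigenspace

theorem stmt_15_general {V : Type*} [Fintype V] (G : SimpleGraph V) (n d : ℕ)
    (hcard : Fintype.card V = n)
    (hd3 : d % 3 = 0)
    (v : ℕ → V)
    (hpath : ∀ i ∈ Finset.Icc 1 (d + 1), ∀ j ∈ Finset.Icc 1 (d + 1),
      G.dist (v i) (v j) = max i j - min i j)
    (hmult : multNegOne G = n - d - 1)
    (x u : V) (hxP : ∀ i ∈ Finset.Icc 1 (d + 1), x ≠ v i) (huP : ∀ i ∈ Finset.Icc 1 (d + 1), u ≠ v i) (i j : ℕ)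
    (hx : pathNbrs G d v x = {i})
    (hu : pathNbrs G d v u = {j, j + 1})
    (hadj : G.Adj x u) :
    j = i ∨ j = i - 1 := by
  have hP := isInducedPath_of_dist hpath
  have notMem_path : ∀ w, (∀ b ∈ Icc 1 (d + 1), w ≠ v b) → w ∉ (Icc 1 (d + 1)).image v :=
    fun w hw hmem => by
      obtain ⟨b, hb, rfl⟩ := mem_image.mp hmem
      exact hw b hb rfl
  obtain ⟨y, hy, hyoff⟩ :=
    hP.exists_mem_negOneEigenspace_eq_single (by omega) (by rw [hmult, hcard]; omega) x
  have hyx : y x = 1 := by simpa using hyoff x (notMem_path x hxP)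
  have hsupp : ∀ z ∉ (Icc 1 (d + 1)).image v, z ≠ x → y z = 0 := fun z hz hzx => by
    simpa [hzx] using hyoff z hz
  obtain ⟨hyi, hrec⟩ := hP.pathSeq_of_pathNbrs_eq_singleton (notMem_path x hxP) hy hyx hsupp hx
  have hmem : ∀ b ∈ ({j, j + 1} : Finset ℕ), b ∈ Icc 1 (d + 1) ∧ G.Adj u (v b) := fun b hb =>
    mem_filter.mp (hu ▸ hb)
  have hi := mem_filter.mp (hx ▸ mem_singleton_self i : i ∈ pathNbrs G d v x)
  obtain ⟨hj, hju⟩ := hmem j (by simp)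
  obtain ⟨hj', hju'⟩ := hmem (j + 1) (by simp)
  have hsum :=
    hP.sum_pathNbrs_of_adj (notMem_path x hxP) hy hyx hsupp (notMem_path u huP) hadj.symm
  rw [hu, sum_pair (by omega), ← pathSeq_of_mem (v := v) (y := y) hj,
    ← pathSeq_of_mem (v := v) (y := y) hj'] at hsum
  have hwin := hpath i hi.1 j hj ▸ G.dist_le_three hi.2.symm hadj hju
  have hwin' := hpath i hi.1 (j + 1) hj' ▸ G.dist_le_three hi.2.symm hadj hju'
  simp only [mem_Icc] at hi hj hj'
  exact eq_or_eq_pred_of_add_eq_neg_one (N := d + 1) (by omega) hi.1.2 (by simp [pathSeq])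
    (by simp [pathSeq]) hyi hrec (by omega) (by omega) (by omega) hsum

theorem stmt_15 {V : Type*} [Fintype V] (G : SimpleGraph V) (n d : ℕ)
    (hconn : G.Connected)
    (hcard : Fintype.card V = n)
    (hcanon : ∀ a b : V, (∀ z : V, (z = a ∨ G.Adj a z) ↔ (z = b ∨ G.Adj b z)) → a = b)
    (hd3 : d % 3 = 0)
    (hdiam : ∀ a b : V, G.dist a b ≤ d)
    (v : ℕ → V)
    (hpath : ∀ i ∈ Finset.Icc 1 (d + 1), ∀ j ∈ Finset.Icc 1 (d + 1),
      G.dist (v i) (v j) = max i j - min i j)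
    (hmult : multNegOne G = n - d - 1)
    (x u : V) (hxP : ∀ i ∈ Finset.Icc 1 (d + 1), x ≠ v i) (huP : ∀ i ∈ Finset.Icc 1 (d + 1), u ≠ v i) (i j : ℕ)
    (hx : pathNbrs G d v x = {i})
    (hu : pathNbrs G d v u = {j, j + 1})
    (hadj : G.Adj x u) :
    j = i ∨ j = i - 1 :=
  stmt_15_general G n d hcard hd3 v hpath hmult x u hxP huP i j hx hu hadj
end

section
/- Let G be a finite simple connected C-canonical graph of order n and diameter d with d ≡ 1 (mod 3) and m_G(−1) = n − d − 1, and let P = v_1 v_2 ⋯ v_{d+1} be a diameter path of G. If x is a vertex not on P whose unique neighbor on P is v_i, then i ≡ 0 (mod 3), and the induced subgraph of G on V(P) ∪ {x} has −1 as an eigenvalue of multiplicity exactly 1. -/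
/-!
Since `m_G(-1) = n - d - 1`, the matrix `A + I` of `G` has rank `d + 1`, and so every principal
submatrix has rank at most `d + 1`. The one on the `d + 2` vertices of `P ∪ {x}` is `A + I` of a
path with a pendant vertex at `v_i`, so it has a nonzero kernel vector. Along the path such a vector
satisfies `g (k-1) + g k + g (k+1) = [k = i] g i` with `g 0 = g (d+2) = 0`, hence it is determined
by `g 1`, and the kernel is at most one-dimensional. Solving the recurrence with the 3-periodic
sequence `q = 0, 1, -1, …` gives `g (d+2) = -(q i)² g 1`, so a nonzero kernel forces `q i = 0`,
that is `3 ∣ i`.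
-/

attribute [local instance] Classical.propDecidable

def pathNullSeq (k : ℕ) : ℝ := if k % 3 = 1 then 1 else if k % 3 = 2 then -1 else 0

@[simp] lemma pathNullSeq_zero : pathNullSeq 0 = 0 := by simp [pathNullSeq]

@[simp] lemma pathNullSeq_one : pathNullSeq 1 = 1 := by simp [pathNullSeq]

lemma pathNullSeq_add_add (k : ℕ) :
    pathNullSeq k + pathNullSeq (k + 1) + pathNullSeq (k + 2) = 0 := by
  unfold pathNullSeq
  split_ifs <;> first | omega | norm_num

lemma pathNullSeq_eq_neg (a b : ℕ) (h : (a + b) % 3 = 0) : pathNullSeq a = -pathNullSeq b := by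
  unfold pathNullSeq
  split_ifs <;> first | omega | norm_num

lemma pathNullSeq_ne_zero {k : ℕ} (h : k % 3 ≠ 0) : pathNullSeq k ≠ 0 := by
  unfold pathNullSeq
  split_ifs <;> first | omega | norm_num

lemma pathNullSeq_sub_add_add (k i : ℕ) :
    pathNullSeq (k - i) + pathNullSeq (k + 1 - i) + pathNullSeq (k + 2 - i) =
      if k + 1 = i then 1 else 0 := by
  rcases le_or_gt i k with hik | hki
  · rw [if_neg (by omega), show k + 1 - i = k - i + 1 by omega,
      show k + 2 - i = k - i + 2 by omega, pathNullSeq_add_add]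
  · rw [Nat.sub_eq_zero_of_le hki.le]
    rcases (by omega : k + 1 = i ∨ k + 2 = i ∨ k + 2 < i) with rfl | rfl | h
    · simp
    · simp
    · rw [Nat.sub_eq_zero_of_le (by omega : k + 1 ≤ i), Nat.sub_eq_zero_of_le h.le,
        if_neg (by omega)]
      simp

-- Past `i` the jump in the recurrence starts a copy of `pathNullSeq` scaled by its value at `i`;
-- for `k ≤ i` the truncated `k - i` is `0`, where that copy vanishes.
def pendantNullSeq (i k : ℕ) : ℝ := pathNullSeq k + pathNullSeq i * pathNullSeq (k - i)

-- `g k` is the value of a kernel vector at `v k`, extended by `g 0 = g (d + 2) = 0`; the equation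
-- at the pendant vertex, `f x = -g i`, is already substituted.
def PendantRecurrence (d i : ℕ) (g : ℕ → ℝ) : Prop :=
  ∀ k ≤ d, g k + g (k + 1) + g (k + 2) = if k + 1 = i then g i else 0

@[simp] lemma pendantNullSeq_zero (i : ℕ) : pendantNullSeq i 0 = 0 := by
  simp [pendantNullSeq]

@[simp] lemma pendantNullSeq_one (i : ℕ) : pendantNullSeq i 1 = 1 := by
  rcases i with _ | i <;> simp [pendantNullSeq]

lemma pendantNullSeq_of_mod_three (d i : ℕ) (hd : d % 3 = 1) (hi : i ≤ d + 2) :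
    pendantNullSeq i (d + 2) = -pathNullSeq i ^ 2 := by
  rw [pendantNullSeq, pathNullSeq_eq_neg (d + 2 - i) i (by omega),
    pathNullSeq_eq_neg (d + 2) 0 (by omega), pathNullSeq_zero]
  ring

lemma pendantRecurrence_pendantNullSeq (d i : ℕ) : PendantRecurrence d i (pendantNullSeq i) := by
  intro k _
  have hq := pathNullSeq_add_add k
  have hshift := pathNullSeq_sub_add_add k i
  unfold pendantNullSeq
  split_ifs at hshift ⊢ with hki
  · rw [Nat.sub_self, pathNullSeq_zero]
    linear_combination hq + pathNullSeq i * hshift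
  · linear_combination hq + pathNullSeq i * hshift

namespace PendantRecurrence

variable {d i : ℕ} {g : ℕ → ℝ}

lemma eq_zero (hg : PendantRecurrence d i g) (h0 : g 0 = 0) (h1 : g 1 = 0) :
    ∀ k ≤ d + 2, g k = 0 := by
  suffices h : ∀ k ≤ d + 1, g k = 0 ∧ g (k + 1) = 0 by
    intro k hk
    rcases k with _ | k
    · exact h0
    · exact (h k (by omega)).2
  intro k hk
  induction k with
  | zero => exact ⟨h0, h1⟩
  | succ k ih =>
    obtain ⟨hk0, hk1⟩ := ih (by omega)
    refine ⟨hk1, ?_⟩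
    have hrhs : (if k + 1 = i then g i else 0) = 0 := by
      split_ifs with hi
      · rw [← hi, hk1]
      · rfl
    linarith [hg k (by omega)]

lemma eq_mul_pendantNullSeq (hg : PendantRecurrence d i g) (h0 : g 0 = 0) :
    ∀ k ≤ d + 2, g k = g 1 * pendantNullSeq i k := by
  have hdiff : PendantRecurrence d i (fun k => g k - g 1 * pendantNullSeq i k) := by
    intro k hk
    have h := hg k hk
    have hP := pendantRecurrence_pendantNullSeq d i k hk
    split_ifs at h hP ⊢ <;> linear_combination h - g 1 * hP
  intro k hk
  have := hdiff.eq_zero (by simp [h0]) (by simp) k hk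
  linarith

lemma one_eq_zero (hg : PendantRecurrence d i g) (h0 : g 0 = 0) (hend : g (d + 2) = 0)
    (hd : d % 3 = 1) (hi : i % 3 ≠ 0) (hid : i ≤ d + 2) : g 1 = 0 := by
  have h := hg.eq_mul_pendantNullSeq h0 (d + 2) le_rfl
  rw [hend, pendantNullSeq_of_mod_three d i hd hid] at h
  have hq : pathNullSeq i ^ 2 ≠ 0 := pow_ne_zero 2 (pathNullSeq_ne_zero hi)
  have : g 1 * pathNullSeq i ^ 2 = 0 := by linarith
  exact (mul_eq_zero.mp this).resolve_right hq

end PendantRecurrence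

namespace SimpleGraph

variable {V : Type*} (G : SimpleGraph V)

lemma multNegOne_add_rank [Fintype V] [DecidableEq V] [DecidableRel G.Adj] :
    multNegOne G + (G.adjMatrix ℝ + 1).rank = Fintype.card V := by
  -- `multNegOne` is stated with the classical instances
  obtain rfl := Subsingleton.elim ‹DecidableRel G.Adj› (fun _ _ => Classical.propDecidable _)
  obtain rfl := Subsingleton.elim ‹DecidableEq V› (fun _ _ => Classical.propDecidable _)
  rw [multNegOne, Matrix.rank, ← Matrix.toLin'_apply', add_comm,
    LinearMap.finrank_range_add_finrank_ker, Module.finrank_fintype_fun_eq_card]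

lemma multNegOne_add_card_le [Fintype V] (s : Set V) [Fintype s] :
    multNegOne G + Fintype.card s ≤ multNegOne (G.induce s) + Fintype.card V := by
  have hrank : ((G.induce s).adjMatrix ℝ + 1).rank ≤ (G.adjMatrix ℝ + 1).rank := by
    convert Matrix.rank_submatrix_le (G.adjMatrix ℝ + 1) ((↑) : s → V) ((↑) : s → V)
    ext u w
    simp [Matrix.one_apply, Subtype.ext_iff]
  have := multNegOne_add_rank G
  have := multNegOne_add_rank (G.induce s)
  omega

noncomputable def negOneKer {W : Type*} [Fintype W] (H : SimpleGraph W) :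
    Submodule ℝ (W → ℝ) :=
  LinearMap.ker (Matrix.toLin' (H.adjMatrix ℝ + 1))

lemma finrank_negOneKer {W : Type*} [Fintype W] (H : SimpleGraph W) :
    Module.finrank ℝ H.negOneKer = multNegOne H :=
  rfl

lemma add_sum_eq_zero_of_mem_negOneKer {W : Type*} [Fintype W] {H : SimpleGraph W} {f : W → ℝ}
    (hf : f ∈ H.negOneKer) (u : W) : f u + ∑ w, (if H.Adj u w then f w else 0) = 0 := by
  have := congrFun (LinearMap.mem_ker.mp hf) u
  simpa [Matrix.add_mulVec, adjMatrix_mulVec_apply, neighborFinset_eq_filter,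
    Finset.sum_filter, add_comm] using this

lemma exists_domRestrict_eq {s : Set V} (f : s → ℝ) : ∃ F : V → ℝ, s.domRestrict F = f :=
  ⟨Function.extend Subtype.val f 0, Function.extend_comp Subtype.val_injective f 0⟩

structure IsPendantPath (d : ℕ) (v : ℕ → V) (x : V) (i : ℕ) : Prop where
  injOn : Set.InjOn v (Finset.Icc 1 (d + 1))
  adj_iff : ∀ j ∈ Finset.Icc 1 (d + 1), ∀ k ∈ Finset.Icc 1 (d + 1),
    G.Adj (v j) (v k) ↔ j = k + 1 ∨ k = j + 1
  ne : ∀ j ∈ Finset.Icc 1 (d + 1), x ≠ v j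
  pendant_mem : i ∈ Finset.Icc 1 (d + 1)
  adj_pendant_iff : ∀ j ∈ Finset.Icc 1 (d + 1), G.Adj x (v j) ↔ j = i

lemma IsPendantPath.of_dist {d : ℕ} {v : ℕ → V} {x : V} {i : ℕ}
    (hdist : ∀ j ∈ Finset.Icc 1 (d + 1), ∀ k ∈ Finset.Icc 1 (d + 1),
      G.dist (v j) (v k) = max j k - min j k)
    (hx : ∀ j ∈ Finset.Icc 1 (d + 1), x ≠ v j) (hnbrs : pathNbrs G d v x = {i}) :
    G.IsPendantPath d v x i where
  injOn j hj k hk hjk := by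
    have := hdist j hj k hk
    rw [hjk, dist_self] at this
    omega
  adj_iff j hj k hk := by
    rw [← dist_eq_one_iff_adj, hdist j hj k hk]
    omega
  ne := hx
  pendant_mem := by
    have hi : i ∈ pathNbrs G d v x := by simp [hnbrs]
    exact (Finset.mem_filter.mp hi).1
  adj_pendant_iff j hj := by
    rw [← Finset.mem_singleton, ← hnbrs, pathNbrs, Finset.mem_filter]
    exact (and_iff_right hj).symm

abbrev pendantPathVerts (d : ℕ) (v : ℕ → V) (x : V) : Set V := v '' Set.Icc 1 (d + 1) ∪ {x}

def pathSeq (d : ℕ) (v : ℕ → V) (F : V → ℝ) (j : ℕ) : ℝ :=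
  if j ∈ Finset.Icc 1 (d + 1) then F (v j) else 0

lemma pathSeq_of_mem {d : ℕ} {v : ℕ → V} {F : V → ℝ} {j : ℕ}
    (hj : j ∈ Finset.Icc 1 (d + 1)) :
    pathSeq d v F j = F (v j) :=
  if_pos hj

lemma sum_ite_eq_pathSeq (d : ℕ) (v : ℕ → V) (F : V → ℝ) (m : ℕ) :
    ∑ j ∈ Finset.Icc 1 (d + 1), (if j = m then pathSeq d v F j else 0) = pathSeq d v F m := by
  rw [Finset.sum_ite_eq']
  unfold pathSeq
  split_ifs <;> rfl

namespace IsPendantPath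

variable {G} {d : ℕ} {v : ℕ → V} {x : V} {i : ℕ} [Fintype (pendantPathVerts d v x)]
  (hP : G.IsPendantPath d v x i)
include hP

lemma sum_eq {M : Type*} [AddCommMonoid M] (h : V → M) :
    ∑ w : pendantPathVerts d v x, h w = ∑ j ∈ Finset.Icc 1 (d + 1), h (v j) + h x := by
  have hdisj : Disjoint ((Finset.Icc 1 (d + 1)).image v) {x} := by
    simpa [Finset.disjoint_singleton_right] using fun j h1 h2 => (hP.ne j (by simp [h1, h2])).symm
  rw [← Finset.sum_subtype ((Finset.Icc 1 (d + 1)).image v ∪ {x}) (fun w => by simp),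
    Finset.sum_union hdisj, Finset.sum_image hP.injOn, Finset.sum_singleton]

lemma card_eq : Fintype.card (pendantPathVerts d v x) = d + 2 := by
  rw [Fintype.card_eq_sum_ones, hP.sum_eq (fun _ => 1)]
  simp

lemma add_sum_eq_zero_of_mem_negOneKer {F : V → ℝ}
    (hF : (pendantPathVerts d v x).domRestrict F ∈
      (G.induce (pendantPathVerts d v x)).negOneKer)
    {u : V} (hu : u ∈ pendantPathVerts d v x) :
    F u + ∑ j ∈ Finset.Icc 1 (d + 1), (if G.Adj u (v j) then F (v j) else 0) +
      (if G.Adj u x then F x else 0) = 0 := by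
  rw [add_assoc, ← hP.sum_eq fun w => if G.Adj u w then F w else 0]
  exact SimpleGraph.add_sum_eq_zero_of_mem_negOneKer hF ⟨u, hu⟩

lemma pendantRecurrence_of_mem_negOneKer {F : V → ℝ}
    (hF : (pendantPathVerts d v x).domRestrict F ∈
      (G.induce (pendantPathVerts d v x)).negOneKer) :
    PendantRecurrence d i (pathSeq d v F) ∧ F x = -pathSeq d v F i := by
  have hx : F x = -pathSeq d v F i := by
    have hsum : ∑ j ∈ Finset.Icc 1 (d + 1), (if G.Adj x (v j) then F (v j) else 0) =
        pathSeq d v F i := by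
      rw [← sum_ite_eq_pathSeq]
      exact Finset.sum_congr rfl fun j hj => by simp [hP.adj_pendant_iff j hj, pathSeq_of_mem hj]
    have := hP.add_sum_eq_zero_of_mem_negOneKer hF (Or.inr rfl)
    rw [hsum, if_neg (G.loopless.irrefl x)] at this
    linarith
  refine ⟨fun k hk => ?_, hx⟩
  have hk1 : k + 1 ∈ Finset.Icc 1 (d + 1) := Finset.mem_Icc.mpr ⟨by omega, by omega⟩
  have hsum : ∑ j ∈ Finset.Icc 1 (d + 1), (if G.Adj (v (k + 1)) (v j) then F (v j) else 0) =
      pathSeq d v F k + pathSeq d v F (k + 2) := by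
    rw [← sum_ite_eq_pathSeq d v F k, ← sum_ite_eq_pathSeq d v F (k + 2),
      ← Finset.sum_add_distrib]
    refine Finset.sum_congr rfl fun j hj => ?_
    rw [hP.adj_iff _ hk1 j hj, pathSeq_of_mem hj]
    split_ifs <;> first | omega | simp
  have hpend : G.Adj (v (k + 1)) x ↔ k + 1 = i :=
    (G.adj_comm _ _).trans (hP.adj_pendant_iff _ hk1)
  have := hP.add_sum_eq_zero_of_mem_negOneKer hF (Or.inl ⟨k + 1, Finset.mem_Icc.mp hk1, rfl⟩)
  rw [hsum, ← pathSeq_of_mem (v := v) (F := F) hk1, hx] at this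
  simp only [hpend] at this
  split_ifs at this ⊢ <;> linarith

lemma domRestrict_eq_zero_of_mem_negOneKer {F : V → ℝ}
    (hF : (pendantPathVerts d v x).domRestrict F ∈
      (G.induce (pendantPathVerts d v x)).negOneKer)
    (h1 : F (v 1) = 0) : (pendantPathVerts d v x).domRestrict F = 0 := by
  obtain ⟨hrec, hx⟩ := hP.pendantRecurrence_of_mem_negOneKer hF
  have hseq := hrec.eq_zero (by simp [pathSeq]) (by simp [pathSeq, h1])
  have hpath : ∀ j ∈ Finset.Icc 1 (d + 1), F (v j) = 0 := fun j hj => by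
    rw [← pathSeq_of_mem (v := v) (F := F) hj]
    exact hseq j (by have := (Finset.mem_Icc.mp hj).2; omega)
  funext ⟨w, hw⟩
  rcases hw with ⟨j, hj, rfl⟩ | rfl
  · exact hpath j (Finset.mem_Icc.mpr hj)
  · simp [Set.domRestrict_apply, hx, pathSeq_of_mem hP.pendant_mem, hpath i hP.pendant_mem]

lemma multNegOne_induce_le_one : multNegOne (G.induce (pendantPathVerts d v x)) ≤ 1 := by
  have hv1 : v 1 ∈ pendantPathVerts d v x := Or.inl ⟨1, ⟨le_rfl, by omega⟩, rfl⟩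
  let φ : (G.induce (pendantPathVerts d v x)).negOneKer →ₗ[ℝ] ℝ :=
    LinearMap.proj (R := ℝ) (φ := fun _ => ℝ) ⟨v 1, hv1⟩ ∘ₗ Submodule.subtype _
  have hφ : Function.Injective φ := by
    rw [← LinearMap.ker_eq_bot, Submodule.eq_bot_iff]
    rintro ⟨f, hf⟩ hφf
    obtain ⟨F, rfl⟩ := exists_domRestrict_eq f
    exact Subtype.ext (hP.domRestrict_eq_zero_of_mem_negOneKer hf hφf)
  rw [← finrank_negOneKer, ← Module.finrank_self ℝ]
  exact LinearMap.finrank_le_finrank_of_injective hφ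

lemma multNegOne_induce_eq_zero (hd : d % 3 = 1) (hi : i % 3 ≠ 0) :
    multNegOne (G.induce (pendantPathVerts d v x)) = 0 := by
  rw [← finrank_negOneKer, Submodule.finrank_eq_zero, Submodule.eq_bot_iff]
  intro f hf
  obtain ⟨F, rfl⟩ := exists_domRestrict_eq f
  have hi' := Finset.mem_Icc.mp hP.pendant_mem
  have h1 := (hP.pendantRecurrence_of_mem_negOneKer hf).1.one_eq_zero (by simp [pathSeq])
    (by simp [pathSeq]) hd hi (by omega)
  exact hP.domRestrict_eq_zero_of_mem_negOneKer hf (by simpa [pathSeq] using h1)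

lemma one_le_multNegOne_induce [Fintype V] (hmult : multNegOne G = Fintype.card V - d - 1) :
    1 ≤ multNegOne (G.induce (pendantPathVerts d v x)) := by
  have hcard := hP.card_eq
  have hcard_le : Fintype.card (pendantPathVerts d v x) ≤ Fintype.card V :=
    Fintype.card_le_of_injective _ Subtype.val_injective
  have := G.multNegOne_add_card_le (pendantPathVerts d v x)
  omega

end IsPendantPath

end SimpleGraph

theorem stmt_17_general {V : Type*} [Fintype V] (G : SimpleGraph V) (n d : ℕ)
    (hcard : Fintype.card V = n)
    (hd3 : d % 3 = 1)
    (v : ℕ → V)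
    (hpath : ∀ i ∈ Finset.Icc 1 (d + 1), ∀ j ∈ Finset.Icc 1 (d + 1),
      G.dist (v i) (v j) = max i j - min i j)
    (hmult : multNegOne G = n - d - 1)
    (x : V) (hxP : ∀ i ∈ Finset.Icc 1 (d + 1), x ≠ v i) (i : ℕ) (hNP : pathNbrs G d v x = {i}) :
    i % 3 = 0 ∧ multNegOne (G.induce ((v '' Set.Icc 1 (d + 1)) ∪ {x})) = 1 := by
  subst hcard
  have hP := SimpleGraph.IsPendantPath.of_dist G hpath hxP hNP
  have hpos := hP.one_le_multNegOne_induce hmult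
  refine ⟨?_, le_antisymm hP.multNegOne_induce_le_one hpos⟩
  by_contra hi
  have := hP.multNegOne_induce_eq_zero hd3 hi
  omega

theorem stmt_17 {V : Type*} [Fintype V] (G : SimpleGraph V) (n d : ℕ)
    (hconn : G.Connected)
    (hcard : Fintype.card V = n)
    (hcanon : ∀ a b : V, (∀ z : V, (z = a ∨ G.Adj a z) ↔ (z = b ∨ G.Adj b z)) → a = b)
    (hd3 : d % 3 = 1)
    (hdiam : ∀ a b : V, G.dist a b ≤ d)
    (v : ℕ → V)
    (hpath : ∀ i ∈ Finset.Icc 1 (d + 1), ∀ j ∈ Finset.Icc 1 (d + 1),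
      G.dist (v i) (v j) = max i j - min i j)
    (hmult : multNegOne G = n - d - 1)
    (x : V) (hxP : ∀ i ∈ Finset.Icc 1 (d + 1), x ≠ v i) (i : ℕ) (hNP : pathNbrs G d v x = {i}) :
    i % 3 = 0 ∧ multNegOne (G.induce ((v '' Set.Icc 1 (d + 1)) ∪ {x})) = 1 :=
  stmt_17_general G n d hcard hd3 v hpath hmult x hxP i hNP
end
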